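/- arXiv:2402.05097 — 3 statements merged into one kernel-verified Lean document; each statement's English description precedes it below -/
import Mathlib

section
/- Let (m_k)_{k≥1} be a sequence of positive reals such that ∑_{k≥1} m_k^{-1/(2k)} = ∞. Then for every fixed integer p ≥ 1, the shifted sequence also satisfies ∑_{k≥1} m_{k+p}^{-1/(2k)} = ∞. -/
open Real

lemma key_bound (x : ℝ) (hx : 0 < x) (k p : ℕ) :
    x ^ (-(1 / (2 * ((k : ℝ) + 1 + p)))) ≤
      2 ^ p * x ^ (-(1 / (2 * ((k : ℝ) + 1)))) + (1 / 2 : ℝ) ^ (k + 1) := by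
  set K : ℝ := (k : ℝ) + 1 with hK
  have hK0 : 0 < K := by positivity
  have hKP : 0 < K + p := by positivity
  set y : ℝ := x ^ (-(1 / (2 * (K + p)))) with hy
  have hy0 : 0 < y := Real.rpow_pos_of_pos hx _
  have hfa : x ^ (-(1 / (2 * K))) = y ^ ((K + p) / K) := by
    rw [hy, ← Real.rpow_mul hx.le]
    congr 1
    field_simp
  have hsplit : y ^ ((K + p) / K) = y * y ^ ((p : ℝ) / K) := by
    have : (K + p) / K = 1 + (p : ℝ) / K := by field_simp
    rw [this, Real.rpow_add hy0, Real.rpow_one]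
  rcases le_or_gt ((1 / 2 : ℝ) ^ (k + 1)) y with hcase | hcase
  · -- y large: y ≤ 2^p * x^(-a)
    have hle : ((1 / 2 : ℝ) ^ (k + 1)) ^ ((p : ℝ) / K) ≤ y ^ ((p : ℝ) / K) :=
      Real.rpow_le_rpow (by positivity) hcase (by positivity)
    have hval : ((1 / 2 : ℝ) ^ (k + 1)) ^ ((p : ℝ) / K) = (1 / 2 : ℝ) ^ p := by
      rw [← Real.rpow_natCast (1/2 : ℝ) (k + 1), ← Real.rpow_mul (by norm_num),
        ← Real.rpow_natCast (1/2 : ℝ) p]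
      congr 1
      push_cast [hK]
      field_simp
    have h1 : y * (1 / 2 : ℝ) ^ p ≤ x ^ (-(1 / (2 * K))) := by
      rw [hfa, hsplit]
      have := mul_le_mul_of_nonneg_left hle hy0.le
      rw [hval] at this
      linarith
    have h2 : y ≤ 2 ^ p * x ^ (-(1 / (2 * K))) := by
      have h2p : (0:ℝ) < 2 ^ p := by positivity
      have := mul_le_mul_of_nonneg_left h1 h2p.le
      calc y = 2 ^ p * (y * (1/2:ℝ) ^ p) := by
              rw [one_div, inv_pow]; field_simp
        _ ≤ 2 ^ p * x ^ (-(1 / (2 * K))) := this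
    have : (0:ℝ) ≤ (1 / 2 : ℝ) ^ (k + 1) := by positivity
    linarith
  · -- y small
    have : (0:ℝ) ≤ 2 ^ p * x ^ (-(1 / (2 * K))) := by positivity
    linarith

set_option maxHeartbeats 1000000 in
/-- Carleman's condition is preserved under shifting the moment sequence by `p`. -/
theorem stmt_0 (m : ℕ → ℝ) (hm : ∀ k, 1 ≤ k → 0 < m k)
    (hdiv : ¬ Summable (fun k : ℕ => (m (k + 1)) ^ (-(1 / (2 * (k + 1) : ℝ)))))
    (p : ℕ) (hp : 1 ≤ p) :
    ¬ Summable (fun k : ℕ => (m (k + 1 + p)) ^ (-(1 / (2 * (k + 1) : ℝ)))) := by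
  intro hf
  apply hdiv
  rw [← summable_nat_add_iff p]
  have hgeo : Summable (fun k : ℕ => (1 / 2 : ℝ) ^ (k + 1)) :=
    ((summable_geometric_of_lt_one (by norm_num) (by norm_num : (1/2:ℝ) < 1)).mul_right
      ((1:ℝ)/2)).congr fun k => (pow_succ _ _).symm
  have hb : Summable (fun k : ℕ =>
      2 ^ p * (m (k + 1 + p)) ^ (-(1 / (2 * (k + 1) : ℝ))) + (1 / 2 : ℝ) ^ (k + 1)) :=
    (hf.mul_left _).add hgeo
  refine Summable.of_nonneg_of_le (fun k => Real.rpow_nonneg (hm _ (by omega)).le _)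
    (fun k => ?_) hb
  have h := key_bound (m (k + 1 + p)) (hm _ (by omega)) k p
  have e1 : k + p + 1 = k + 1 + p := by omega
  rw [e1]
  have e2 : ((k + p : ℕ) : ℝ) + 1 = (k : ℝ) + 1 + p := by push_cast; ring
  rw [show (2 * (((k + p : ℕ) : ℝ) + 1)) = 2 * ((k : ℝ) + 1 + (p:ℝ)) by rw [e2]]
  exact h
end

section
/- Let μ and μ' be two finite Borel measures on a metric space S, and let ε > 0 satisfy d_Pr(μ, μ') < ε, where d_Pr is the Prohorov distance. Let f: S → ℝ≥0 be a 1-Lipschitz function and r > 0. Then for every closed set C ⊆ {f ≥ r}, one has μ(C ∩ {f ≥ r}) ≤ μ'(C^ε ∩ {f ≥ r}) + ε + μ'({r − ε ≤ f < r}), where C^ε is the open ε-enlargement of C. -/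
open MeasureTheory Metric

/-- Key estimate in Lemma 5.3: comparison of restrictions to a superlevel set of a
1-Lipschitz functional, in terms of the Prokhorov distance of the full measures. -/
theorem stmt_5 {S : Type*} [MeasurableSpace S] [MetricSpace S] [BorelSpace S]
    (μ μ' : Measure S) [IsFiniteMeasure μ] [IsFiniteMeasure μ']
    (ε : ℝ) (hε : 0 < ε) (h : levyProkhorovDist μ μ' < ε)
    (f : S → ℝ) (hf0 : ∀ x, 0 ≤ f x) (hlip : LipschitzWith 1 f)
    (r : ℝ) (hr : 0 < r) (C : Set S) (hC : IsClosed C) (hCr : C ⊆ {x | r ≤ f x}) :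
    μ C ≤ μ' (thickening ε C ∩ {x | r ≤ f x}) + ENNReal.ofReal ε
        + μ' {x | r - ε ≤ f x ∧ f x < r} := by
  have hedist : levyProkhorovEDist μ μ' < ENNReal.ofReal ε := by
    rw [levyProkhorovDist] at h
    exact (ENNReal.lt_ofReal_iff_toReal_lt (levyProkhorovEDist_ne_top μ μ')).mpr h
  have key := left_measure_le_of_levyProkhorovEDist_lt hedist hC.measurableSet
  rw [ENNReal.toReal_ofReal hε.le] at key
  have hfc : Continuous f := hlip.continuous
  have hA : MeasurableSet {x : S | r ≤ f x} := measurableSet_le measurable_const hfc.measurable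
  -- thickening ε C ∩ {f < r} ⊆ {r - ε ≤ f < r}
  have hsub : thickening ε C \ {x : S | r ≤ f x} ⊆ {x | r - ε ≤ f x ∧ f x < r} := by
    rintro x ⟨hx, hx2⟩
    simp only [Set.mem_setOf_eq, not_le] at hx2 ⊢
    refine ⟨?_, hx2⟩
    obtain ⟨y, hyC, hxy⟩ := mem_thickening_iff.mp hx
    have h1 : r ≤ f y := hCr hyC
    have h2 : |f x - f y| ≤ dist x y := by
      have := hlip.dist_le_mul x y
      rwa [Real.dist_eq, NNReal.coe_one, one_mul] at this
    have := abs_le.mp h2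
    linarith [this.1]
  have hsplit : μ' (thickening ε C) ≤
      μ' (thickening ε C ∩ {x : S | r ≤ f x}) + μ' {x | r - ε ≤ f x ∧ f x < r} := by
    calc μ' (thickening ε C)
        = μ' (thickening ε C ∩ {x : S | r ≤ f x}) + μ' (thickening ε C \ {x : S | r ≤ f x}) :=
          (measure_inter_add_diff _ hA).symm
      _ ≤ _ := add_le_add le_rfl (measure_mono hsub)
  calc μ C ≤ μ' (thickening ε C) + ENNReal.ofReal ε := key
    _ ≤ (μ' (thickening ε C ∩ {x : S | r ≤ f x}) + μ' {x | r - ε ≤ f x ∧ f x < r})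
        + ENNReal.ofReal ε := add_le_add hsplit le_rfl
    _ = _ := by ring
end

section
/- Let (μ_n) and μ be finite measures on a metric space with μ_n → μ vaguely (i.e., μ_n[F] → μ[F] for all continuous bounded F supported away from a distinguished point 0 in the sense that F vanishes on {d(0, ·) < ε} for some ε > 0), and suppose μ_n(S) → μ(S) < ∞. Then lim_{ε→0} limsup_{n→∞} μ_n({d(0,·) ≤ ε}) ≤ μ({0}). -/
open MeasureTheory Filter Topology

/-!
Take a continuous `f : S → [0, 1]` equal to `1` on `closedBall z ε` and to `0` off `ball z ε'`.
Since `f` is constant near `z`, vague convergence together with convergence of the total masses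
gives `∫ f dμₙ → ∫ f dμ`, whence `limsup μₙ (closedBall z ε) ≤ ∫ f dμ ≤ μ (ball z ε')`.
Letting `ε' → 0`, the balls decrease to `{z}`.
-/

theorem tendsto_measure_ball_nhdsGT {S : Type*} [MeasurableSpace S] [PseudoMetricSpace S]
    [OpensMeasurableSpace S] (μ : Measure S) (z : S) (h : ∃ r > 0, μ (Metric.ball z r) ≠ ⊤) :
    Tendsto (fun r => μ (Metric.ball z r)) (𝓝[>] 0) (𝓝 (μ (Metric.closedBall z 0))) := by
  have := tendsto_measure_biInter_gt (μ := μ) (s := Metric.ball z) (a := 0)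
    (fun _ _ => Metric.isOpen_ball.measurableSet.nullMeasurableSet)
    (fun _ _ _ hij => Metric.ball_subset_ball hij) h
  rwa [Metric.biInter_gt_ball] at this

section VagueConvergence

variable {S : Type*} [MeasurableSpace S] [MetricSpace S] [BorelSpace S]
  {z : S} {μN : ℕ → Measure S} {μ : Measure S} [∀ n, IsFiniteMeasure (μN n)] [IsFiniteMeasure μ]

theorem integrable_of_continuous_of_bounded {ν : Measure S} [IsFiniteMeasure ν] {G : S → ℝ}
    (hG : Continuous G) (hGb : ∃ M : ℝ, ∀ x, |G x| ≤ M) : Integrable G ν := by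
  obtain ⟨M, hM⟩ := hGb
  exact (integrable_const M).mono' hG.aestronglyMeasurable (.of_forall hM)

theorem tendsto_integral_of_eq_const_near
    (hvague : ∀ F : S → ℝ, Continuous F → (∃ M : ℝ, ∀ x, |F x| ≤ M) →
      (∃ ε > (0 : ℝ), ∀ x, dist z x < ε → F x = 0) →
      Tendsto (fun n => ∫ x, F x ∂(μN n)) atTop (𝓝 (∫ x, F x ∂μ)))
    (hmass : Tendsto (fun n => ((μN n) Set.univ).toReal) atTop (𝓝 ((μ Set.univ).toReal)))
    {G : S → ℝ} (hG : Continuous G) (hGb : ∃ M : ℝ, ∀ x, |G x| ≤ M) {c δ : ℝ} (hδ : 0 < δ)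
    (hc : ∀ x, dist z x < δ → G x = c) :
    Tendsto (fun n => ∫ x, G x ∂(μN n)) atTop (𝓝 (∫ x, G x ∂μ)) := by
  obtain ⟨M, hM⟩ := hGb
  have hbound : ∃ M' : ℝ, ∀ x, |G x - c| ≤ M' :=
    ⟨M + |c|, fun x => (abs_sub _ _).trans (by gcongr; exact hM x)⟩
  have hshift := hvague (fun x => G x - c) (hG.sub continuous_const) hbound
    ⟨δ, hδ, fun x hx => sub_eq_zero.2 (hc x hx)⟩
  have hsplit : ∀ (ν : Measure S) [IsFiniteMeasure ν],
      ∫ x, G x ∂ν = ∫ x, (G x - c) ∂ν + (ν Set.univ).toReal * c := fun ν _ => by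
    rw [integral_sub (integrable_of_continuous_of_bounded hG ⟨M, hM⟩) (integrable_const c),
      integral_const, smul_eq_mul, measureReal_def]
    ring
  simp only [hsplit]
  exact hshift.add (hmass.mul_const c)

theorem limsup_measure_closedBall_le
    (hvague : ∀ F : S → ℝ, Continuous F → (∃ M : ℝ, ∀ x, |F x| ≤ M) →
      (∃ ε > (0 : ℝ), ∀ x, dist z x < ε → F x = 0) →
      Tendsto (fun n => ∫ x, F x ∂(μN n)) atTop (𝓝 (∫ x, F x ∂μ)))
    (hmass : Tendsto (fun n => ((μN n) Set.univ).toReal) atTop (𝓝 ((μ Set.univ).toReal)))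
    {ε ε' : ℝ} (hε : 0 < ε) (hεε' : ε < ε') :
    limsup (fun n => μN n (Metric.closedBall z ε)) atTop ≤ μ (Metric.ball z ε') := by
  obtain ⟨f, hf_out, hf_in, hf_range⟩ := exists_continuous_zero_one_of_isClosed
    (Metric.isOpen_ball (x := z) (ε := ε')).isClosed_compl Metric.isClosed_closedBall
    (Set.disjoint_compl_left_iff_subset.2 (Metric.closedBall_subset_ball hεε'))
  have hf_bdd : ∃ M : ℝ, ∀ x, |f x| ≤ M :=
    ⟨1, fun x => abs_le.2 ⟨by linarith [(hf_range x).1], (hf_range x).2⟩⟩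
  have hf_near : ∀ x, dist z x < ε → f x = 1 := fun x hx =>
    hf_in (Metric.ball_subset_closedBall (Metric.mem_ball'.2 hx))
  have hlim := tendsto_integral_of_eq_const_near hvague hmass f.continuous hf_bdd hε hf_near
  calc limsup (fun n => μN n (Metric.closedBall z ε)) atTop
      ≤ limsup (fun n => ENNReal.ofReal (∫ x, f x ∂(μN n))) atTop :=
        limsup_le_limsup (.of_forall fun n =>
          (integrable_of_continuous_of_bounded f.continuous hf_bdd).measure_le_integral
            (.of_forall fun x => (hf_range x).1) fun x hx => (hf_in hx).ge)
    _ = ENNReal.ofReal (∫ x, f x ∂μ) := (ENNReal.tendsto_ofReal hlim).limsup_eq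
    _ ≤ μ (Metric.ball z ε') :=
        integral_le_measure (fun x _ => (hf_range x).2) fun x hx => (hf_out hx).le

end VagueConvergence

/-- Mass-escape estimate (inequality (3.1)): under vague convergence away from the
distinguished point `z` plus convergence of total masses, the mass near `z`
asymptotically does not exceed the atom of the limit at `z`. -/
theorem stmt_9 {S : Type*} [MeasurableSpace S] [MetricSpace S] [BorelSpace S]
    (z : S) (μN : ℕ → Measure S) (μ : Measure S)
    [∀ n, IsFiniteMeasure (μN n)] [IsFiniteMeasure μ]
    (hvague : ∀ F : S → ℝ, Continuous F → (∃ M : ℝ, ∀ x, |F x| ≤ M) →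
      (∃ ε > (0 : ℝ), ∀ x, dist z x < ε → F x = 0) →
      Tendsto (fun n => ∫ x, F x ∂(μN n)) atTop (𝓝 (∫ x, F x ∂μ)))
    (hmass : Tendsto (fun n => ((μN n) Set.univ).toReal) atTop
      (𝓝 ((μ Set.univ).toReal))) :
    ⨅ (ε : ℝ) (_ : 0 < ε),
        Filter.limsup (fun n => (μN n) (Metric.closedBall z ε)) atTop
      ≤ μ {z} := by
  have hball := tendsto_measure_ball_nhdsGT μ z ⟨1, one_pos, measure_ne_top μ _⟩
  rw [Metric.closedBall_zero] at hball
  refine ge_of_tendsto hball ?_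
  filter_upwards [self_mem_nhdsWithin] with r (hr : 0 < r)
  exact (iInf₂_le (r / 2) (half_pos hr)).trans
    (limsup_measure_closedBall_le hvague hmass (half_pos hr) (half_lt_self hr))
end
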